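/- arXiv:2301.11449 — 3 statements merged into one kernel-verified Lean document; each statement's English description precedes it below -/
import Mathlib

section
/- If τ₁ and τ₂ are tubes of a finite poset P that are neither nested nor disjoint, then the convex hull conv(τ₁ ∪ τ₂) is convex and connected in the Hasse diagram (i.e., is a tube). -/
open Finset

section Defs
variable {α : Type*} [Fintype α] [PartialOrder α] [DecidableEq α]

/-- `τ` is connected as an induced subgraph of the Hasse diagram of the poset. -/
def IsConnectedIn (τ : Finset α) : Prop :=
  ∀ a ∈ τ, ∀ b ∈ τ,
    Relation.ReflTransGen (fun x y => x ∈ τ ∧ y ∈ τ ∧ (x ⋖ y ∨ y ⋖ x)) a b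

/-- `τ` is (order-)convex. -/
def IsConvexIn (τ : Finset α) : Prop :=
  ∀ a ∈ τ, ∀ c ∈ τ, ∀ b, a ≤ b → b ≤ c → b ∈ τ

/-- A tube: connected, convex, of size at least 2. -/
def IsTube (τ : Finset α) : Prop :=
  IsConnectedIn τ ∧ IsConvexIn τ ∧ 2 ≤ τ.card

/-- A proper tube additionally has at most `|P| - 1` elements. -/
def IsProperTube (τ : Finset α) : Prop :=
  IsTube τ ∧ τ.card ≤ Fintype.card α - 1

open Classical in
/-- `α_τ(p) = Σ_{i ⋖ j, i,j ∈ τ} (p j - p i)`, over covering relations inside `τ`. -/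
noncomputable def alphaF (τ : Finset α) (p : α → ℝ) : ℝ :=
  ∑ i ∈ τ, ∑ j ∈ τ, if i ⋖ j then p j - p i else 0

/-- `diam_S(p) = max_{i,j ∈ S} |p i - p j|`. -/
noncomputable def diamF (S : Finset α) (p : α → ℝ) : ℝ :=
  if h : (S ×ˢ S).Nonempty then (S ×ˢ S).sup' h fun ij => |p ij.1 - p ij.2| else 0

open Classical in
/-- `conv S = {b : ∃ a c ∈ S, a ≤ b ≤ c}`. -/
noncomputable def convF (S : Finset α) : Finset α :=
  univ.filter fun b => ∃ a ∈ S, ∃ c ∈ S, a ≤ b ∧ b ≤ c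

/-- The relation `σ ≺ τ` on disjoint tubes of a tubing. -/
def TubingRel (T : Finset (Finset α)) (σ τ : Finset α) : Prop :=
  σ ∈ T ∧ τ ∈ T ∧ (∀ x ∈ σ, x ∉ τ) ∧ ∃ a ∈ σ, ∃ b ∈ τ, a < b

/-- A proper tubing: proper tubes, pairwise nested or disjoint, with acyclic `≺`. -/
def IsProperTubing (T : Finset (Finset α)) : Prop :=
  (∀ τ ∈ T, IsProperTube τ) ∧
  (∀ σ ∈ T, ∀ τ ∈ T, σ ⊆ τ ∨ τ ⊆ σ ∨ ∀ x ∈ σ, x ∉ τ) ∧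
  ∀ τ ∈ T, ¬ Relation.TransGen (TubingRel T) τ τ

/-- A maximal proper tubing. -/
def IsMaximalTubing (T : Finset (Finset α)) : Prop :=
  IsProperTubing T ∧ ∀ T', IsProperTubing T' → T ⊆ T' → T = T'

end Defs

/-! Two connected sets that meet have connected union, and the convex hull of a connected set
`S` is again connected: each `b ∈ conv S` lies above some `a ∈ S`, and a maximal chain from `a`
to `b` stays inside the convex set `conv S`. -/

open Relation

section Hasse
variable {α : Type*} [PartialOrder α]

/-- `IsConnectedIn τ` unfolds to `ReflTransGen (HasseAdjIn τ)` relating any two points of `τ`. -/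
def HasseAdjIn (τ : Finset α) (x y : α) : Prop :=
  x ∈ τ ∧ y ∈ τ ∧ (x ⋖ y ∨ y ⋖ x)

instance (τ : Finset α) : Std.Symm (HasseAdjIn τ) :=
  ⟨fun _ _ ⟨hx, hy, h⟩ => ⟨hy, hx, h.symm⟩⟩

lemma HasseAdjIn.mono {τ σ : Finset α} (h : τ ⊆ σ) : HasseAdjIn τ ≤ HasseAdjIn σ :=
  fun _ _ ⟨hx, hy, hcov⟩ => ⟨h hx, h hy, hcov⟩

lemma reflTransGen_hasseAdjIn_symm {τ : Finset α} {a b : α}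
    (h : ReflTransGen (HasseAdjIn τ) a b) : ReflTransGen (HasseAdjIn τ) b a :=
  ReflTransGen.stdSymm.symm a b h

lemma IsConnectedIn.of_forall_reflTransGen {τ : Finset α} (w : α)
    (h : ∀ a ∈ τ, ReflTransGen (HasseAdjIn τ) a w) : IsConnectedIn τ :=
  fun a ha b hb => (h a ha).trans (reflTransGen_hasseAdjIn_symm (h b hb))

lemma IsConnectedIn.union [DecidableEq α] {τ₁ τ₂ : Finset α} (h₁ : IsConnectedIn τ₁)
    (h₂ : IsConnectedIn τ₂) (hmeet : (τ₁ ∩ τ₂).Nonempty) : IsConnectedIn (τ₁ ∪ τ₂) := by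
  obtain ⟨w, hw⟩ := hmeet
  rw [mem_inter] at hw
  refine .of_forall_reflTransGen w fun a ha => ?_
  rcases mem_union.mp ha with ha | ha
  · exact ReflTransGen.mono (HasseAdjIn.mono subset_union_left) _ _ (h₁ a ha w hw.1)
  · exact ReflTransGen.mono (HasseAdjIn.mono subset_union_right) _ _ (h₂ a ha w hw.2)

lemma IsConvexIn.reflTransGen_of_le [LocallyFiniteOrder α] {τ : Finset α} (hτ : IsConvexIn τ)
    {a b : α} (ha : a ∈ τ) (hb : b ∈ τ) (hab : a ≤ b) : ReflTransGen (HasseAdjIn τ) a b := by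
  suffices ∀ c, ReflTransGen (· ⋖ ·) a c → c ≤ b → ReflTransGen (HasseAdjIn τ) a c from
    this b (le_iff_reflTransGen_covBy.mp hab) le_rfl
  intro c hchain
  induction hchain with
  | refl => exact fun _ => .refl
  | @tail m c hchain hmc ih =>
    intro hcb
    have ham : a ≤ m := le_iff_reflTransGen_covBy.mpr hchain
    exact .tail (ih (hmc.le.trans hcb))
      ⟨hτ a ha b hb m ham (hmc.le.trans hcb), hτ a ha b hb c (ham.trans hmc.le) hcb, .inl hmc⟩

end Hasse

section Conv
variable {α : Type*} [Fintype α] [PartialOrder α]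

lemma mem_convF {S : Finset α} {b : α} :
    b ∈ convF S ↔ ∃ a ∈ S, ∃ c ∈ S, a ≤ b ∧ b ≤ c := by
  classical
  simp [convF]

lemma subset_convF {S : Finset α} : S ⊆ convF S :=
  fun a ha => mem_convF.mpr ⟨a, ha, a, ha, le_rfl, le_rfl⟩

lemma isConvexIn_convF (S : Finset α) : IsConvexIn (convF S) := by
  intro x hx z hz y hxy hyz
  obtain ⟨a, ha, -, -, hax, -⟩ := mem_convF.mp hx
  obtain ⟨-, -, c, hc, -, hzc⟩ := mem_convF.mp hz
  exact mem_convF.mpr ⟨a, ha, c, hc, hax.trans hxy, hyz.trans hzc⟩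

lemma isConnectedIn_convF {S : Finset α} (hS : IsConnectedIn S) : IsConnectedIn (convF S) := by
  classical
  have : LocallyFiniteOrder α := Fintype.toLocallyFiniteOrder
  have from_below : ∀ b ∈ convF S, ∃ a ∈ S, ReflTransGen (HasseAdjIn (convF S)) a b := by
    intro b hb
    obtain ⟨a, ha, -, -, hab, -⟩ := mem_convF.mp hb
    exact ⟨a, ha, (isConvexIn_convF S).reflTransGen_of_le (subset_convF ha) hb hab⟩
  intro b hb b' hb'
  obtain ⟨a, ha, hab⟩ := from_below b hb
  obtain ⟨a', ha', hab'⟩ := from_below b' hb'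
  exact (reflTransGen_hasseAdjIn_symm hab).trans <|
    (ReflTransGen.mono (HasseAdjIn.mono subset_convF) _ _ (hS a ha a' ha')).trans hab'

end Conv

theorem conv_union_isTube_general {α : Type*} [Fintype α] [PartialOrder α] [DecidableEq α]
    (τ₁ τ₂ : Finset α) (h1 : IsTube τ₁) (h2 : IsTube τ₂)
    (hdisj : (τ₁ ∩ τ₂).Nonempty) :
    IsTube (convF (τ₁ ∪ τ₂)) :=
  ⟨isConnectedIn_convF (h1.1.union h2.1 hdisj), isConvexIn_convF _,
    h1.2.2.trans (card_le_card (subset_union_left.trans subset_convF))⟩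

/-- if tubes `τ₁, τ₂` are neither nested nor disjoint, then
`conv(τ₁ ∪ τ₂)` is a tube (convex and connected in the Hasse diagram). -/
theorem conv_union_isTube {α : Type*} [Fintype α] [PartialOrder α] [DecidableEq α]
    (τ₁ τ₂ : Finset α) (h1 : IsTube τ₁) (h2 : IsTube τ₂)
    (hnest : ¬ τ₁ ⊆ τ₂ ∧ ¬ τ₂ ⊆ τ₁) (hdisj : (τ₁ ∩ τ₂).Nonempty) :
    IsTube (convF (τ₁ ∪ τ₂)) :=
  conv_union_isTube_general τ₁ τ₂ h1 h2 hdisj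
end

section
/- Let P be a finite poset with n elements and τ₁, …, τ_k pairwise disjoint tubes forming a cycle τ₁ ≺ τ₂ ≺ ⋯ ≺ τ_k ≺ τ₁ (for each i there exist x_i ∈ τ_i, y_{i+1} ∈ τ_{i+1 mod k} with x_i < y_{i+1}). If p : P → ℝ is order-preserving and diam_{τ_i}(p) ≤ D for all i, then for any elements z ∈ τ_i and z' ∈ τ_j, |p_z − p_{z'}| ≤ 2(k+1)·D + 2D. -/
open Finset

/-
Following the cycle: `p (x i) ≤ p (y (i + 1)) ≤ p (x (i + 1)) + D` by monotonicity and the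
diameter bound on `τ (i + 1)`, so going from `i` to `j` along the cycle takes fewer than `k` steps
and gives `p (x i) ≤ p (x j) + k D`. Every `z ∈ τ i` is within `D` of `x i`, which bounds
`p z - p z'` by `k D + 2 D`.
-/

theorem abs_sub_le_diamF {α : Type*} {S : Finset α} {p : α → ℝ} {a b : α}
    (ha : a ∈ S) (hb : b ∈ S) : |p a - p b| ≤ diamF S p := by
  have hab : (a, b) ∈ S ×ˢ S := mk_mem_product ha hb
  rw [diamF, dif_pos ⟨_, hab⟩]
  exact le_sup' (fun ij => |p ij.1 - p ij.2|) hab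

section CyclicChain

open Fin.NatCast

variable {β : Type*} [AddCommMonoid β] [PartialOrder β] [IsOrderedAddMonoid β]
  {k : ℕ} [NeZero k] {g : Fin k → β} {D : β}

theorem Fin.le_add_nsmul_of_le_succ_add (hstep : ∀ i, g i ≤ g (i + 1) + D) (i : Fin k) :
    ∀ m : ℕ, g i ≤ g (i + m) + m • D
  | 0 => by simp
  | m + 1 => calc
      g i ≤ g (i + m) + m • D := Fin.le_add_nsmul_of_le_succ_add hstep i m
      _ ≤ g (i + m + 1) + D + m • D := by gcongr; exact hstep _
      _ = g (i + ↑(m + 1)) + (m + 1) • D := by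
        rw [succ_nsmul, Nat.cast_succ, add_assoc i, add_assoc, add_comm D]

theorem Fin.le_add_card_nsmul_of_le_succ_add (hD : 0 ≤ D)
    (hstep : ∀ i, g i ≤ g (i + 1) + D) (i j : Fin k) : g i ≤ g j + k • D := calc
  g i ≤ g (i + ↑(j - i).val) + (j - i).val • D := Fin.le_add_nsmul_of_le_succ_add hstep i _
  _ = g j + (j - i).val • D := by rw [Fin.cast_val_eq_self, add_sub_cancel]
  _ ≤ g j + k • D := by gcongr; exact (j - i).is_lt.le

end CyclicChain

theorem incompatible_case_two_general {α : Type*} [PartialOrder α]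
    {k : ℕ} [NeZero k] (τ : Fin k → Finset α)
    (x y : Fin k → α) (hx : ∀ i, x i ∈ τ i) (hy : ∀ i, y i ∈ τ i)
    (hcyc : ∀ i : Fin k, x i < y (i + 1))
    (p : α → ℝ) (hp : Monotone p) (D : ℝ) (hD : ∀ i, diamF (τ i) p ≤ D)
    (i j : Fin k) (z z' : α) (hz : z ∈ τ i) (hz' : z' ∈ τ j) :
    |p z - p z'| ≤ 2 * (k + 1) * D + 2 * D := by
  have hdiam : ∀ l, ∀ a ∈ τ l, ∀ b ∈ τ l, p a - p b ≤ D := fun l a ha b hb =>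
    (le_abs_self _).trans ((abs_sub_le_diamF ha hb).trans (hD l))
  have hD0 : 0 ≤ D := by simpa using hdiam i z hz z hz
  have hstep : ∀ l, p (x l) ≤ p (x (l + 1)) + D := fun l => by
    linarith [hp (hcyc l).le, hdiam (l + 1) _ (hy _) _ (hx _)]
  have hchain := Fin.le_add_card_nsmul_of_le_succ_add hD0 hstep
  have hupper : ∀ l m, ∀ a ∈ τ l, ∀ b ∈ τ m, p a - p b ≤ k * D + 2 * D := by
    intro l m a ha b hb
    have := hchain l m
    rw [nsmul_eq_mul] at this
    linarith [hdiam l a ha _ (hx l), hdiam m _ (hx m) b hb]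
  have hk : (k : ℝ) * D ≤ 2 * (k + 1) * D := by nlinarith [(Nat.cast_nonneg k : (0 : ℝ) ≤ k)]
  rw [abs_sub_le_iff]
  constructor <;> linarith [hupper i j z hz z' hz', hupper j i z' hz' z hz]

/-- pairwise disjoint tubes forming a cycle `τ₁ ≺ ⋯ ≺ τ_k ≺ τ₁`,
with each `diam_{τ_i}(p) ≤ D`, force all values of `p` on `∪ τ_i` to be within
`2(k+1)·D + 2D` of each other. -/
theorem incompatible_case_two {α : Type*} [Fintype α] [PartialOrder α] [DecidableEq α]
    {k : ℕ} [NeZero k] (τ : Fin k → Finset α) (htube : ∀ i, IsTube (τ i))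
    (hdisj : ∀ i j, i ≠ j → ∀ x ∈ τ i, x ∉ τ j)
    (x y : Fin k → α) (hx : ∀ i, x i ∈ τ i) (hy : ∀ i, y i ∈ τ i)
    (hcyc : ∀ i : Fin k, x i < y (i + 1))
    (p : α → ℝ) (hp : Monotone p) (D : ℝ) (hD : ∀ i, diamF (τ i) p ≤ D)
    (i j : Fin k) (z z' : α) (hz : z ∈ τ i) (hz' : z' ∈ τ j) :
    |p z - p z'| ≤ 2 * (k + 1) * D + 2 * D :=
  incompatible_case_two_general τ x y hx hy hcyc p hp D hD i j z z' hz hz'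
end

section
/- Let P be a finite connected poset, T a maximal proper tubing of P. Then the intersection of the hyperplanes H_τ = {p ∈ ℝ^P_{Σ=0} : α_τ(p) = n^{2|τ|}} over all τ ∈ T ∪ {P} is a single point. -/
open Finset

/-!
Call the maximal tubes of `T` strictly inside a node `τ ∈ T ∪ {P}`, together with the points of
`τ` they leave uncovered, the blocks of `τ`. Acyclicity of `T` makes the relation "some element of
`B` lies below some element of `C`" acyclic on blocks. If `τ` had three blocks, the union of the
two ends of a covering pair of this block order would be a proper tube compatible with `T`,
contradicting maximality; so `τ = B₁ ⊔ B₂` with covering relations only from `B₁` to `B₂`.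
Adding constants `s` on `B₁` and `t` on `B₂` to `p` leaves `α_σ(p)` unchanged for `σ ⊆ Bᵢ` and
changes `α_τ(p)` by `(t - s) · #{(i, j) ∈ B₁ × B₂ : i ⋖ j} ≠ 0`. By induction on `τ`, the
equations for `σ ⊆ τ` determine `p` on `τ` up to an additive constant, which `Σ p = 0` fixes.
-/

namespace Relation

variable {β : Type*} {r r' : β → β → Prop}

theorem ReflTransGen.exists_rel_of_not {p : β → Prop} {a b : β} (h : ReflTransGen r a b)
    (ha : p a) (hb : ¬ p b) : ∃ x y, r x y ∧ p x ∧ ¬ p y := by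
  induction h with
  | refl => exact absurd ha hb
  | @tail c d _ hcd ih =>
    by_cases hc : p c
    · exact ⟨c, d, hcd, hc, hb⟩
    · exact ih hc

theorem not_transGen_self_of_shortcut (p : β → Prop) (hirr : ∀ a, ¬ r a a)
    (hshort : ∀ a b c, r a b → ¬ p b → r b c → r a c)
    (hp : ∀ a, ¬ TransGen (fun x y => p x ∧ p y ∧ r x y) a a) (a : β) : ¬ TransGen r a a := by
  have through_p : ∀ {a b}, TransGen r a b →
      r a b ∨ ∃ x, p x ∧ TransGen r a x ∧ TransGen r x b := by
    intro a b h
    induction h with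
    | single h => exact .inl h
    | @tail b c _ hbc ih =>
      rcases ih with hab | ⟨x, hx, hax, hxb⟩
      · by_cases hb : p b
        · exact .inr ⟨b, hb, .single hab, .single hbc⟩
        · exact .inl (hshort _ _ _ hab hb hbc)
      · exact .inr ⟨x, hx, hax, hxb.tail hbc⟩
  have last_p : ∀ {a b}, p a → TransGen r a b →
      ∃ y, p y ∧ ReflTransGen (fun x y => p x ∧ p y ∧ r x y) a y ∧ r y b := by
    intro a b ha h
    induction h with
    | single h => exact ⟨a, ha, .refl, h⟩
    | @tail b c _ hbc ih =>
      obtain ⟨y, hy, hay, hyb⟩ := ih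
      by_cases hb : p b
      · exact ⟨b, hb, hay.tail ⟨hy, hb, hyb⟩, hbc⟩
      · exact ⟨y, hy, hay, hshort _ _ _ hyb hb hbc⟩
  intro h
  rcases through_p h with haa | ⟨x, hx, hax, hxa⟩
  · exact hirr a haa
  · obtain ⟨y, hy, hxy, hyx⟩ := last_p hx (hxa.trans hax)
    exact hp x (TransGen.tail' hxy ⟨hy, hx, hyx⟩)

theorem exists_rel_forall_not_transGen_between [Finite β] (hr : ∀ a, ¬ TransGen r a a)
    {a c : β} (hac : r a c) : ∃ b, r b c ∧ ∀ x, TransGen r b x → ¬ TransGen r x c := by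
  have : IsTrans β (flip (TransGen r)) := ⟨fun _ _ _ h₁ h₂ => h₂.trans h₁⟩
  have : Std.Irrefl (flip (TransGen r)) := ⟨hr⟩
  obtain ⟨b, ⟨hab, hbc⟩, hmin⟩ :=
    (Finite.wellFounded_of_trans_of_irrefl (flip (TransGen r))).has_min
      {b | ReflTransGen r a b ∧ r b c} ⟨a, .refl, hac⟩
  refine ⟨b, hbc, fun x hbx hxc => ?_⟩
  obtain ⟨y, hxy, hyc⟩ := TransGen.tail'_iff.mp hxc
  exact hmin y ⟨hab.trans (hbx.to_reflTransGen.trans hxy), hyc⟩ (hbx.trans_left hxy)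

theorem TransGen.self_or_exists_loop {v : β} (hrr' : ∀ x y, r x y → r' x y)
    (hr' : ∀ x y, r' x y → x ≠ v → y ≠ v → r x y) {x : β} (h : TransGen r' x x) :
    TransGen r x x ∨ ∃ y z, r' v y ∧ ReflTransGen r y z ∧ r' z v := by
  have avoid_or_visit : ∀ {a b}, TransGen r' a b →
      TransGen r a b ∨ (ReflTransGen r' a v ∧ ReflTransGen r' v b) := by
    intro a b hab
    induction hab with
    | @single b hab =>
      by_cases ha : a = v
      · exact .inr ⟨ha ▸ .refl, ha ▸ .single hab⟩
      by_cases hb : b = v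
      · exact .inr ⟨hb ▸ .single hab, hb ▸ .refl⟩
      exact .inl (.single (hr' _ _ hab ha hb))
    | @tail b c hab hbc ih =>
      by_cases hc : c = v
      · exact .inr ⟨hc ▸ (TransGen.tail hab hbc).to_reflTransGen, hc ▸ .refl⟩
      rcases ih with ih | ⟨hav, hvb⟩
      · by_cases hb : b = v
        · exact .inr ⟨hb ▸ (TransGen.mono hrr' _ _ ih).to_reflTransGen, hb ▸ .single hbc⟩
        · exact .inl (ih.tail (hr' _ _ hbc hb hc))
      · exact .inr ⟨hav, hvb.tail hbc⟩
  have first_return : ∀ {b}, TransGen r' v b →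
      (∃ y, r' v y ∧ ReflTransGen r y b) ∨ ∃ y z, r' v y ∧ ReflTransGen r y z ∧ r' z v := by
    intro b hvb
    induction hvb with
    | single hvb => exact .inl ⟨_, hvb, .refl⟩
    | @tail b c _ hbc ih =>
      rcases ih with ⟨y, hvy, hyb⟩ | hloop
      · by_cases hc : c = v
        · exact .inr ⟨y, b, hvy, hyb, hc ▸ hbc⟩
        by_cases hb : b = v
        · exact .inl ⟨c, hb ▸ hbc, .refl⟩
        exact .inl ⟨y, hvy, hyb.tail (hr' _ _ hbc hb hc)⟩
      · exact .inr hloop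
  rcases avoid_or_visit h with h | ⟨hxv, hvx⟩
  · exact .inl h
  rcases first_return ((TransGen.trans_right hvx h).trans_left hxv) with ⟨y, hvy, hyv⟩ | hloop
  · rcases hyv.cases_tail with hy | ⟨z, hyz, hzv⟩
    · subst hy
      exact .inr ⟨v, v, hvy, .refl, hvy⟩
    · exact .inr ⟨y, z, hvy, hyz, hrr' _ _ hzv⟩
  · exact .inr hloop

end Relation

open Relation

theorem exists_covBy_of_forall_mem_of_lt {α : Type*} [PartialOrder α] [Finite α] {U V : Set α}
    (hUV : ∀ u ∈ U, ∀ v ∈ V, ∀ z, u < z → z < v → z ∈ U ∨ z ∈ V)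
    {a b : α} (ha : a ∈ U) (hb : b ∈ V) (hab : a < b) : ∃ i ∈ U, ∃ j ∈ V, i ⋖ j := by
  obtain ⟨i, -, ⟨hiU, hib⟩, himax⟩ :=
    Finite.exists_le_maximal (p := fun x => x ∈ U ∧ x < b) ⟨ha, hab⟩
  obtain ⟨j, -, ⟨hjV, hij, hjb⟩, hjmin⟩ :=
    Finite.exists_le_minimal (p := fun y => y ∈ V ∧ i < y ∧ y ≤ b) ⟨hb, hib, le_rfl⟩
  refine ⟨i, hiU, j, hjV, hij, fun z hiz hzj => ?_⟩
  rcases hUV i hiU j hjV z hiz hzj with hz | hz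
  · exact hiz.not_ge (himax ⟨hz, hzj.trans_le hjb⟩ hiz.le)
  · exact hzj.not_ge (hjmin ⟨hz, hiz, hzj.le.trans hjb⟩ hzj.le)

section Connected

variable {α : Type*} [PartialOrder α] [DecidableEq α]

theorem IsConnectedIn.union_s11 {B C : Finset α} (hB : IsConnectedIn B) (hC : IsConnectedIn C)
    {i j : α} (hi : i ∈ B) (hj : j ∈ C) (hij : i ⋖ j ∨ j ⋖ i) : IsConnectedIn (B ∪ C) := by
  have mono : ∀ {σ : Finset α}, σ ⊆ B ∪ C → ∀ {a b},
      ReflTransGen (fun x y => x ∈ σ ∧ y ∈ σ ∧ (x ⋖ y ∨ y ⋖ x)) a b →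
      ReflTransGen (fun x y => x ∈ B ∪ C ∧ y ∈ B ∪ C ∧ (x ⋖ y ∨ y ⋖ x)) a b :=
    fun hσ _ _ => ReflTransGen.mono (fun x y hxy => ⟨hσ hxy.1, hσ hxy.2.1, hxy.2.2⟩) _ _
  have cross : ∀ a ∈ B, ∀ b ∈ C,
      ReflTransGen (fun x y => x ∈ B ∪ C ∧ y ∈ B ∪ C ∧ (x ⋖ y ∨ y ⋖ x)) a b := fun a ha b hb =>
    (mono subset_union_left (hB a ha i hi)).trans <| .head
      ⟨mem_union_left _ hi, mem_union_right _ hj, hij⟩ (mono subset_union_right (hC j hj b hb))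
  intro a ha b hb
  rcases mem_union.mp ha with ha | ha <;> rcases mem_union.mp hb with hb | hb
  · exact mono subset_union_left (hB a ha b hb)
  · exact cross a ha b hb
  · have : Std.Symm fun x y => x ∈ B ∪ C ∧ y ∈ B ∪ C ∧ (x ⋖ y ∨ y ⋖ x) :=
      ⟨fun x y hxy => ⟨hxy.2.1, hxy.1, hxy.2.2.symm⟩⟩
    exact symm_of _ (cross b hb a ha)
  · exact mono subset_union_right (hC a ha b hb)

end Connected

section Blocks

variable {α : Type*} {T : Finset (Finset α)} {σ τ B : Finset α}

variable (T) in
def IsNode [Fintype α] (τ : Finset α) : Prop := τ = univ ∨ τ ∈ T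

variable (T) in
def IsPiece (σ : Finset α) : Prop := σ ∈ T ∨ ∃ x, σ = {x}

variable (T) in
/-- The blocks of `τ` are its maximal tubes in `T` and the singletons they leave uncovered. -/
def IsBlock (τ B : Finset α) : Prop := Maximal (fun σ => IsPiece T σ ∧ σ ⊂ τ) B

variable (T) in
def PieceRel [PartialOrder α] (σ ρ : Finset α) : Prop :=
  IsPiece T σ ∧ IsPiece T ρ ∧ Disjoint σ ρ ∧ ∃ a ∈ σ, ∃ b ∈ ρ, a < b

variable (T) in
def BlockRel [PartialOrder α] (τ B C : Finset α) : Prop :=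
  IsBlock T τ B ∧ IsBlock T τ C ∧ PieceRel T B C

variable (T) in
def BlockCovBy [PartialOrder α] (τ B₁ B₂ : Finset α) : Prop :=
  BlockRel T τ B₁ B₂ ∧ ∀ X, TransGen (BlockRel T τ) B₁ X → ¬ TransGen (BlockRel T τ) X B₂

theorem IsBlock.isPiece (hB : IsBlock T τ B) : IsPiece T B := hB.1.1

theorem IsBlock.ssubset (hB : IsBlock T τ B) : B ⊂ τ := hB.1.2

theorem IsPiece.exists_isBlock [Finite α] (hσ : IsPiece T σ) (hστ : σ ⊂ τ) :
    ∃ B, IsBlock T τ B ∧ σ ⊆ B := by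
  obtain ⟨B, hσB, hB⟩ := Finite.exists_le_maximal (p := fun σ => IsPiece T σ ∧ σ ⊂ τ) ⟨hσ, hστ⟩
  exact ⟨B, hB, hσB⟩

theorem exists_isBlock_mem [Finite α] {x y : α} (hx : x ∈ τ) (hy : y ∈ τ) (hyx : y ≠ x) :
    ∃ B, IsBlock T τ B ∧ x ∈ B := by
  obtain ⟨B, hB, hxB⟩ := IsPiece.exists_isBlock (T := T) (.inr ⟨x, rfl⟩)
    (ssubset_of_subset_of_ne (singleton_subset_iff.mpr hx) fun h => hyx (mem_singleton.mp (h ▸ hy)))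
  exact ⟨B, hB, singleton_subset_iff.mp hxB⟩

theorem IsNode.mem_of_disjoint [Fintype α] (hτ : IsNode T τ) (hσ : σ.Nonempty)
    (hστ : Disjoint σ τ) : τ ∈ T := by
  rcases hτ with rfl | hτ
  · obtain ⟨x, hx⟩ := hσ
    exact absurd (mem_univ x) (disjoint_left.mp hστ hx)
  · exact hτ

theorem BlockCovBy.union_subset [PartialOrder α] [DecidableEq α] {B₁ B₂ : Finset α}
    (h : BlockCovBy T τ B₁ B₂) : B₁ ∪ B₂ ⊆ τ :=
  Finset.union_subset h.1.1.ssubset.subset h.1.2.1.ssubset.subset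

end Blocks

section Tubing

variable {α : Type*} [Fintype α] [PartialOrder α] {T : Finset (Finset α)}

theorem IsProperTubing.not_transGen_self (hT : IsProperTubing T) (σ : Finset α) :
    ¬ TransGen (TubingRel T) σ σ := fun h => by
  obtain ⟨_, -, hσ⟩ := TransGen.tail'_iff.mp h
  exact hT.2.2 σ hσ.2.1 h

variable {σ ρ τ B C : Finset α}

theorem IsPiece.nonempty (hT : IsProperTubing T) (hσ : IsPiece T σ) : σ.Nonempty := by
  rcases hσ with hσ | ⟨x, rfl⟩
  · exact card_pos.mp (by have := (hT.1 σ hσ).1.2.2; omega)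
  · exact singleton_nonempty x

theorem IsPiece.isConvexIn (hT : IsProperTubing T) (hσ : IsPiece T σ) : IsConvexIn σ := by
  rcases hσ with hσ | ⟨x, rfl⟩
  · exact (hT.1 σ hσ).1.2.1
  · simp only [IsConvexIn, mem_singleton]
    rintro a rfl c rfl b hab hbc
    exact le_antisymm hbc hab

theorem IsPiece.isConnectedIn (hT : IsProperTubing T) (hσ : IsPiece T σ) : IsConnectedIn σ := by
  rcases hσ with hσ | ⟨x, rfl⟩
  · exact (hT.1 σ hσ).1.1
  · simp only [IsConnectedIn, mem_singleton]
    rintro a rfl b rfl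
    exact .refl

theorem IsPiece.subset_or_subset_or_disjoint [DecidableEq α] (hT : IsProperTubing T)
    (hσ : IsPiece T σ) (hρ : IsPiece T ρ) : σ ⊆ ρ ∨ ρ ⊆ σ ∨ Disjoint σ ρ := by
  rcases hσ with hσ | ⟨x, rfl⟩
  · rcases hρ with hρ | ⟨y, rfl⟩
    · rcases hT.2.1 σ hσ ρ hρ with h | h | h
      exacts [.inl h, .inr (.inl h), .inr (.inr (disjoint_left.mpr h))]
    · by_cases hy : y ∈ σ
      · exact .inr (.inl (singleton_subset_iff.mpr hy))
      · exact .inr (.inr (disjoint_singleton_right.mpr hy))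
  · by_cases hx : x ∈ ρ
    · exact .inl (singleton_subset_iff.mpr hx)
    · exact .inr (.inr (disjoint_singleton_left.mpr hx))

theorem IsNode.subset_or_subset_or_disjoint [DecidableEq α] (hT : IsProperTubing T)
    (hτ : IsNode T τ) (hσ : IsPiece T σ) : σ ⊆ τ ∨ τ ⊆ σ ∨ Disjoint σ τ := by
  rcases hτ with rfl | hτ
  · exact .inl (subset_univ σ)
  · exact hσ.subset_or_subset_or_disjoint hT (.inl hτ)

theorem IsNode.isConvexIn (hT : IsProperTubing T) (hτ : IsNode T τ) : IsConvexIn τ := by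
  rcases hτ with rfl | hτ
  · exact fun _ _ _ _ b _ _ => mem_univ b
  · exact (IsPiece.isConvexIn hT (.inl hτ))

theorem IsNode.isConnectedIn (hT : IsProperTubing T) (hconn : IsConnectedIn (univ : Finset α))
    (hτ : IsNode T τ) : IsConnectedIn τ := by
  rcases hτ with rfl | hτ
  exacts [hconn, (hT.1 τ hτ).1.1]

theorem IsNode.two_le_card (hT : IsProperTubing T) (hn : 2 ≤ Fintype.card α) (hτ : IsNode T τ) :
    2 ≤ τ.card := by
  rcases hτ with rfl | hτ
  exacts [card_univ (α := α) ▸ hn, (hT.1 τ hτ).1.2.2]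

theorem IsProperTubing.not_transGen_pieceRel_self [DecidableEq α] (hT : IsProperTubing T)
    (σ : Finset α) : ¬ TransGen (PieceRel T) σ σ := by
  refine not_transGen_self_of_shortcut (· ∈ T) (fun σ h => ?_) (fun σ ρ ν hσρ hρ hρν => ?_)
    (fun σ h => hT.not_transGen_self σ (TransGen.mono (fun _ _ h => ?_) _ _ h)) σ
  · obtain ⟨-, -, hdisj, a, ha, -⟩ := h
    exact disjoint_left.mp hdisj ha ha
  · obtain ⟨hσ, hρ', hσρ', a, ha, x, hx, hax⟩ := hσρ
    obtain ⟨-, hν, hρν, x', hx', c, hc, hxc⟩ := hρν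
    obtain ⟨y, rfl⟩ := hρ'.resolve_left hρ
    rw [mem_singleton] at hx hx'
    rw [hx] at hax
    rw [hx'] at hxc
    refine ⟨hσ, hν, ?_, a, ha, c, hc, hax.trans hxc⟩
    -- by convexity, `y` would lie in the larger of two nested pieces
    rcases hσ.subset_or_subset_or_disjoint hT hν with h | h | h
    · exact absurd (hν.isConvexIn hT a (h ha) c hc y hax.le hxc.le)
        (disjoint_singleton_left.mp hρν)
    · exact absurd (hσ.isConvexIn hT a ha c (h hc) y hax.le hxc.le)
        (disjoint_singleton_right.mp hσρ')
    · exact h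
  · obtain ⟨h₁, h₂, -, -, hdisj, w⟩ := h
    exact ⟨h₁, h₂, disjoint_left.mp hdisj, w⟩

theorem IsBlock.disjoint [DecidableEq α] (hT : IsProperTubing T) (hB : IsBlock T τ B)
    (hC : IsBlock T τ C) (hne : B ≠ C) : Disjoint B C := by
  rcases hB.isPiece.subset_or_subset_or_disjoint hT hC.isPiece with h | h | h
  · exact absurd (hB.eq_of_le hC.1 h) hne
  · exact absurd (hC.eq_of_ge hB.1 h) hne
  · exact h

theorem IsBlock.eq_of_mem [DecidableEq α] (hT : IsProperTubing T) (hB : IsBlock T τ B)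
    (hC : IsBlock T τ C) {x : α} (hxB : x ∈ B) (hxC : x ∈ C) : B = C := by
  by_contra hne
  exact disjoint_left.mp (hB.disjoint hT hC hne) hxB hxC

theorem BlockRel.of_lt [DecidableEq α] (hT : IsProperTubing T) (hB : IsBlock T τ B)
    (hC : IsBlock T τ C) (hne : B ≠ C) {a c : α} (ha : a ∈ B) (hc : c ∈ C) (hac : a < c) :
    BlockRel T τ B C :=
  ⟨hB, hC, hB.isPiece, hC.isPiece, hB.disjoint hT hC hne, a, ha, c, hc, hac⟩

theorem IsProperTubing.not_transGen_blockRel_self [DecidableEq α] (hT : IsProperTubing T) :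
    ¬ TransGen (BlockRel T τ) B B := fun h =>
  hT.not_transGen_pieceRel_self B (TransGen.mono (fun _ _ h => h.2.2) _ _ h)

variable [DecidableEq α]

theorem IsPiece.disjoint_of_not_subset (hT : IsProperTubing T) (hτ : IsNode T τ)
    (hσ : IsPiece T σ) (hστ : ¬ σ ⊆ τ) (hρ : ρ.Nonempty) (hρτ : ρ ⊆ τ) (hσρ : Disjoint σ ρ) :
    Disjoint σ τ := by
  rcases hτ.subset_or_subset_or_disjoint hT hσ with h | h | h
  · exact absurd h hστ
  · obtain ⟨x, hx⟩ := hρ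
    exact absurd (h (hρτ hx)) (disjoint_right.mp hσρ hx)
  · exact h

theorem PieceRel.to_node (hT : IsProperTubing T) (hτ : IsNode T τ) (h : PieceRel T σ ρ)
    (hστ : ¬ σ ⊆ τ) (hρτ : ρ ⊆ τ) : PieceRel T σ τ := by
  obtain ⟨hσ, -, hσρ, a, ha, b, hb, hab⟩ := h
  have hστ' := hσ.disjoint_of_not_subset hT hτ hστ ⟨b, hb⟩ hρτ hσρ
  exact ⟨hσ, .inl (hτ.mem_of_disjoint ⟨a, ha⟩ hστ'), hστ', a, ha, b, hρτ hb, hab⟩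

theorem PieceRel.of_node (hT : IsProperTubing T) (hτ : IsNode T τ) (h : PieceRel T σ ρ)
    (hστ : σ ⊆ τ) (hρτ : ¬ ρ ⊆ τ) : PieceRel T τ ρ := by
  obtain ⟨-, hρ, hσρ, a, ha, b, hb, hab⟩ := h
  have hρτ' := hρ.disjoint_of_not_subset hT hτ hρτ ⟨a, ha⟩ hστ hσρ.symm
  exact ⟨.inl (hτ.mem_of_disjoint ⟨b, hb⟩ hρτ'), hρ, hρτ'.symm, a, hστ ha, b, hb, hab⟩

theorem Relation.TransGen.pieceRel_to_node (hT : IsProperTubing T) (hτ : IsNode T τ)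
    (h : TransGen (PieceRel T) σ ρ) (hστ : ¬ σ ⊆ τ) (hρτ : ρ ⊆ τ) :
    TransGen (PieceRel T) σ τ := by
  induction h using TransGen.head_induction_on with
  | single h => exact .single (h.to_node hT hτ hστ hρτ)
  | @head σ ν hσν _ ih =>
    by_cases hντ : ν ⊆ τ
    · exact .single (hσν.to_node hT hτ hστ hντ)
    · exact .head hσν (ih hντ)

theorem Relation.TransGen.pieceRel_of_node (hT : IsProperTubing T) (hτ : IsNode T τ)
    (h : TransGen (PieceRel T) σ ρ) (hστ : σ ⊆ τ) (hρτ : ¬ ρ ⊆ τ) :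
    TransGen (PieceRel T) τ ρ := by
  induction h with
  | single h => exact .single (h.of_node hT hτ hστ hρτ)
  | @tail ν ρ _ hνρ ih =>
    by_cases hντ : ν ⊆ τ
    · exact .single (hνρ.of_node hT hτ hντ hρτ)
    · exact .tail (ih hντ) hνρ

/-- Leaving and re-entering `τ` would close a cycle through `τ`. -/
theorem subset_node_of_reflTransGen_of_transGen (hT : IsProperTubing T) (hτ : IsNode T τ)
    {ν : Finset α} (h₁ : ReflTransGen (PieceRel T) σ ν) (h₂ : TransGen (PieceRel T) ν ρ)
    (hστ : σ ⊆ τ) (hρτ : ρ ⊆ τ) : ν ⊆ τ := by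
  by_contra hντ
  rcases reflTransGen_iff_eq_or_transGen.mp h₁ with rfl | h₁
  · exact hντ hστ
  · exact hT.not_transGen_pieceRel_self τ
      ((h₁.pieceRel_of_node hT hτ hστ hντ).trans (h₂.pieceRel_to_node hT hτ hντ hρτ))

theorem reflTransGen_blockRel_of_reflTransGen (hT : IsProperTubing T) (hτ : IsNode T τ)
    (h : ReflTransGen (PieceRel T) σ ρ) (hσ : σ.Nonempty) (hB : IsBlock T τ B)
    (hC : IsBlock T τ C) (hσB : σ ⊆ B) (hρC : ρ ⊆ C) : ReflTransGen (BlockRel T τ) B C := by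
  induction h generalizing C with
  | refl =>
    obtain ⟨x, hx⟩ := hσ
    exact (hB.eq_of_mem hT hC (hσB hx) (hρC hx)) ▸ .refl
  | @tail ν ρ hσν hνρ ih =>
    have hνsub : ν ⊆ τ := subset_node_of_reflTransGen_of_transGen hT hτ hσν (.single hνρ)
      (hσB.trans hB.ssubset.subset) (hρC.trans hC.ssubset.subset)
    obtain ⟨hν, -, hνρ, a, ha, b, hb, hab⟩ := hνρ
    have hντ : ν ⊂ τ := ssubset_of_subset_of_ne hνsub <| by
      rintro rfl
      exact disjoint_right.mp hνρ hb (hC.ssubset.subset (hρC hb))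
    obtain ⟨D, hD, hνD⟩ := hν.exists_isBlock hντ
    refine (ih hD hνD).trans ?_
    by_cases hDC : D = C
    · exact hDC ▸ .refl
    · exact .single (.of_lt hT hD hC hDC (hνD ha) (hρC hb) hab)

section BlockCovBy

variable {B₁ B₂ : Finset α}

theorem BlockCovBy.not_detour (hT : IsProperTubing T) (h : BlockCovBy T τ B₁ B₂)
    {X Y : Finset α} (hX : IsBlock T τ X) (hY : IsBlock T τ Y)
    (hXY : ReflTransGen (BlockRel T τ) X Y) {a x y d : α} (ha : a ∈ B₁ ∪ B₂) (hx : x ∈ X)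
    (hx' : x ∉ B₁ ∪ B₂) (hax : a < x) (hy : y ∈ Y) (hy' : y ∉ B₁ ∪ B₂) (hd : d ∈ B₁ ∪ B₂)
    (hyd : y < d) : False := by
  obtain ⟨h₁₂, hfree⟩ := h
  have hne : ∀ {Z z}, z ∈ Z → z ∉ B₁ ∪ B₂ → Z ≠ B₁ ∧ Z ≠ B₂ := fun hz hz' =>
    ⟨fun h => hz' (mem_union_left _ (h ▸ hz)), fun h => hz' (mem_union_right _ (h ▸ hz))⟩
  refine hfree X ?_ ?_
  · rcases mem_union.mp ha with ha | ha
    · exact .single (.of_lt hT h₁₂.1 hX (hne hx hx').1.symm ha hx hax)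
    · exact .head h₁₂ (.single (.of_lt hT h₁₂.2.1 hX (hne hx hx').2.symm ha hx hax))
  · rcases mem_union.mp hd with hd | hd
    · exact (TransGen.tail' hXY (.of_lt hT hY h₁₂.1 (hne hy hy').1 hy hd hyd)).tail h₁₂
    · exact TransGen.tail' hXY (.of_lt hT hY h₁₂.2.1 (hne hy hy').2 hy hd hyd)

theorem BlockCovBy.mem_union_of_le_of_le (hT : IsProperTubing T) (hτ : IsNode T τ)
    (h : BlockCovBy T τ B₁ B₂) {u v z : α} (hu : u ∈ B₁ ∪ B₂) (hv : v ∈ B₁ ∪ B₂) (huz : u ≤ z)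
    (hzv : z ≤ v) : z ∈ B₁ ∪ B₂ := by
  by_contra hz
  have hzu : z ≠ u := fun h => hz (h ▸ hu)
  have hzv' : z ≠ v := fun h => hz (h ▸ hv)
  obtain ⟨D, hD, hzD⟩ := exists_isBlock_mem (T := T)
    (hτ.isConvexIn hT u (h.union_subset hu) v (h.union_subset hv) z huz hzv)
    (h.union_subset hu) hzu.symm
  exact h.not_detour hT hD hD .refl hu hzD hz (lt_of_le_of_ne huz hzu.symm) hzD hz hv
    (lt_of_le_of_ne hzv hzv')

theorem BlockCovBy.exists_covBy (hT : IsProperTubing T) (hτ : IsNode T τ)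
    (h : BlockCovBy T τ B₁ B₂) : ∃ i ∈ B₁, ∃ j ∈ B₂, i ⋖ j := by
  obtain ⟨-, -, -, -, -, a, ha, b, hb, hab⟩ := h.1
  refine exists_covBy_of_forall_mem_of_lt (U := (B₁ : Set α)) (V := B₂)
    (fun u hu v hv z huz hzv => ?_) ha hb hab
  exact mem_union.mp (h.mem_union_of_le_of_le hT hτ (mem_union_left _ hu)
    (mem_union_right _ hv) huz.le hzv.le)

theorem BlockCovBy.isProperTube_union (hT : IsProperTubing T) (hτ : IsNode T τ)
    (h : BlockCovBy T τ B₁ B₂) {z : α} (hz : z ∉ B₁ ∪ B₂) : IsProperTube (B₁ ∪ B₂) := by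
  obtain ⟨i, hi, j, hj, hij⟩ := h.exists_covBy hT hτ
  refine ⟨⟨(h.1.1.isPiece.isConnectedIn hT).union_s11 (h.1.2.1.isPiece.isConnectedIn hT) hi hj
    (.inl hij), fun a ha c hc b hab hbc => h.mem_union_of_le_of_le hT hτ ha hc hab hbc,
    one_lt_card.mpr ⟨i, mem_union_left _ hi, j, mem_union_right _ hj, hij.ne⟩⟩, ?_⟩
  have := card_lt_univ_of_notMem hz
  omega

theorem BlockCovBy.subset_or_subset_or_disjoint_union (hT : IsProperTubing T)
    (hτ : IsNode T τ) (h : BlockCovBy T τ B₁ B₂) (hσ : σ ∈ T) :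
    σ ⊆ B₁ ∪ B₂ ∨ B₁ ∪ B₂ ⊆ σ ∨ Disjoint σ (B₁ ∪ B₂) := by
  rcases hτ.subset_or_subset_or_disjoint hT (.inl hσ) with hστ | hτσ | hστ
  · by_cases hστ' : σ = τ
    · exact .inr (.inl (hστ' ▸ h.union_subset))
    obtain ⟨D, hD, hσD⟩ := IsPiece.exists_isBlock (.inl hσ) (ssubset_of_subset_of_ne hστ hστ')
    by_cases hD₁ : D = B₁
    · exact .inl (hD₁ ▸ hσD |>.trans subset_union_left)
    by_cases hD₂ : D = B₂
    · exact .inl (hD₂ ▸ hσD |>.trans subset_union_right)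
    exact .inr (.inr (disjoint_union_right.mpr
      ⟨(hD.disjoint hT h.1.1 hD₁).mono_left hσD, (hD.disjoint hT h.1.2.1 hD₂).mono_left hσD⟩))
  · exact .inr (.inl (h.union_subset.trans hτσ))
  · exact .inr (.inr (hστ.mono_right h.union_subset))

/-- A cycle through the new tube would give, after projection to the blocks of `τ`, a detour
from `B₁` to `B₂`. -/
theorem BlockCovBy.not_transGen_tubingRel_insert (hT : IsProperTubing T) (hτ : IsNode T τ)
    (h : BlockCovBy T τ B₁ B₂) (σ : Finset α) :
    ¬ TransGen (TubingRel (insert (B₁ ∪ B₂) T)) σ σ := by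
  intro hσσ
  have hrestrict : ∀ σ ρ, TubingRel (insert (B₁ ∪ B₂) T) σ ρ → σ ≠ B₁ ∪ B₂ → ρ ≠ B₁ ∪ B₂ →
      TubingRel T σ ρ := fun σ ρ ⟨hσ, hρ, h⟩ hσ' hρ' =>
    ⟨(mem_insert.mp hσ).resolve_left hσ', (mem_insert.mp hρ).resolve_left hρ', h⟩
  rcases TransGen.self_or_exists_loop (fun σ ρ ⟨hσ, hρ, h⟩ =>
    ⟨mem_insert_of_mem hσ, mem_insert_of_mem hρ, h⟩) hrestrict hσσ with hσσ | ⟨σ, ρ, hσ, hσρ, hρ⟩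
  · exact hT.not_transGen_self σ hσσ
  obtain ⟨-, hσT, hσdisj, a, ha, b, hb, hab⟩ := hσ
  obtain ⟨hρT, -, hρdisj, c, hc, d, hd, hcd⟩ := hρ
  have hb' : b ∉ B₁ ∪ B₂ := fun hb' => hσdisj b hb' hb
  have hd' : d ∉ ρ := fun hd' => hρdisj d hd' hd
  have hσT : σ ∈ T := (mem_insert.mp hσT).resolve_left (by rintro rfl; exact hb' hb)
  have hρT : ρ ∈ T := (mem_insert.mp hρT).resolve_left (by rintro rfl; exact hd' hd)
  have hpath : ReflTransGen (PieceRel T) σ ρ := ReflTransGen.mono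
    (fun _ _ h => ⟨.inl h.1, .inl h.2.1, disjoint_left.mpr h.2.2.1, h.2.2.2⟩) _ _ hσρ
  have haσ : PieceRel T {a} σ := ⟨.inr ⟨a, rfl⟩, .inl hσT,
    disjoint_singleton_left.mpr (hσdisj a ha), a, mem_singleton_self a, b, hb, hab⟩
  have hρd : PieceRel T ρ {d} :=
    ⟨.inl hρT, .inr ⟨d, rfl⟩, disjoint_singleton_right.mpr hd', c, hc, d, mem_singleton_self d, hcd⟩
  have haτ : {a} ⊆ τ := singleton_subset_iff.mpr (h.union_subset ha)
  have hdτ : {d} ⊆ τ := singleton_subset_iff.mpr (h.union_subset hd)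
  have hστ : σ ⊂ τ := ssubset_of_subset_of_ne
    (subset_node_of_reflTransGen_of_transGen hT hτ (.single haσ) (.tail' hpath hρd) haτ hdτ)
    (by rintro rfl; exact hσdisj a ha (h.union_subset ha))
  have hρτ : ρ ⊂ τ := ssubset_of_subset_of_ne
    (subset_node_of_reflTransGen_of_transGen hT hτ ((ReflTransGen.single haσ).trans hpath)
      (.single hρd) haτ hdτ)
    (by rintro rfl; exact hd' (h.union_subset hd))
  obtain ⟨X, hX, hσX⟩ := IsPiece.exists_isBlock (.inl hσT) hστ
  obtain ⟨Y, hY, hρY⟩ := IsPiece.exists_isBlock (.inl hρT) hρτ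
  exact h.not_detour hT hX hY (reflTransGen_blockRel_of_reflTransGen hT hτ hpath ⟨b, hb⟩ hX hY
    hσX hρY) ha (hσX hb) hb' hab (hρY hc) (hρdisj c hc) hd hcd

theorem BlockCovBy.isProperTubing_insert (hT : IsProperTubing T) (hτ : IsNode T τ)
    (h : BlockCovBy T τ B₁ B₂) {z : α} (hz : z ∉ B₁ ∪ B₂) :
    IsProperTubing (insert (B₁ ∪ B₂) T) := by
  refine ⟨fun σ hσ => ?_, fun σ hσ ρ hρ => ?_, fun σ _ => h.not_transGen_tubingRel_insert hT hτ σ⟩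
  · rcases mem_insert.mp hσ with rfl | hσ
    · exact h.isProperTube_union hT hτ hz
    · exact hT.1 σ hσ
  rcases mem_insert.mp hσ with rfl | hσ <;> rcases mem_insert.mp hρ with rfl | hρ
  · exact .inl subset_rfl
  · rcases h.subset_or_subset_or_disjoint_union hT hτ hρ with h' | h' | h'
    exacts [.inr (.inl h'), .inl h', .inr (.inr (disjoint_right.mp h'))]
  · rcases h.subset_or_subset_or_disjoint_union hT hτ hσ with h' | h' | h'
    exacts [.inl h', .inr (.inl h'), .inr (.inr (disjoint_left.mp h'))]
  · exact hT.2.1 σ hσ ρ hρ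

theorem IsMaximalTubing.eq_or_eq_of_isBlock (hT : IsMaximalTubing T) (hτ : IsNode T τ)
    (h : BlockCovBy T τ B₁ B₂) {D : Finset α} (hD : IsBlock T τ D) : D = B₁ ∨ D = B₂ := by
  by_contra! hD'
  obtain ⟨z, hz⟩ := hD.isPiece.nonempty hT.1
  have hz' : z ∉ B₁ ∪ B₂ := by
    rw [mem_union]
    rintro (hz' | hz')
    exacts [hD'.1 (hD.eq_of_mem hT.1 h.1.1 hz hz'), hD'.2 (hD.eq_of_mem hT.1 h.1.2.1 hz hz')]
  have hmem : B₁ ∪ B₂ ∈ T :=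
    (hT.2 _ (h.isProperTubing_insert hT.1 hτ hz') (subset_insert _ _)) ▸ mem_insert_self _ _
  have hpiece : IsPiece T (B₁ ∪ B₂) ∧ B₁ ∪ B₂ ⊂ τ :=
    ⟨.inl hmem, ssubset_of_subset_of_ne h.union_subset fun h => hz' (h ▸ hD.ssubset.subset hz)⟩
  have h₁ := h.1.1.eq_of_le hpiece subset_union_left
  have h₂ := h.1.2.1.eq_of_le hpiece subset_union_right
  exact hT.1.not_transGen_blockRel_self (.single ((h₁.trans h₂.symm) ▸ h.1))

theorem exists_blockRel (hT : IsProperTubing T) (hconn : IsConnectedIn τ) (hcard : 2 ≤ τ.card) :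
    ∃ B C, BlockRel T τ B C := by
  obtain ⟨x, hx, y, hy, hxy⟩ := one_lt_card.mp hcard
  obtain ⟨B, hB, hxB⟩ := exists_isBlock_mem (T := T) hx hy hxy.symm
  obtain ⟨z, hz, hzB⟩ := exists_of_ssubset hB.ssubset
  obtain ⟨i, j, ⟨hi, hj, hij⟩, hiB, hjB⟩ :=
    (hconn x hx z hz).exists_rel_of_not (p := (· ∈ B)) hxB hzB
  obtain ⟨C, hC, hjC⟩ := exists_isBlock_mem (T := T) hj hi (fun h => hjB (h ▸ hiB))
  have hBC : B ≠ C := fun h => hjB (h ▸ hjC)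
  rcases hij with hij | hji
  · exact ⟨B, C, .of_lt hT hB hC hBC hiB hjC hij.lt⟩
  · exact ⟨C, B, .of_lt hT hC hB hBC.symm hjC hiB hji.lt⟩

theorem exists_blockCovBy (hT : IsProperTubing T) (hconn : IsConnectedIn τ)
    (hcard : 2 ≤ τ.card) : ∃ B₁ B₂, BlockCovBy T τ B₁ B₂ := by
  obtain ⟨B, C, hBC⟩ := exists_blockRel hT hconn hcard
  obtain ⟨B₁, h⟩ := exists_rel_forall_not_transGen_between
    (fun _ => hT.not_transGen_blockRel_self) hBC
  exact ⟨B₁, C, h⟩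

end BlockCovBy

variable (T) in
structure IsSplit (τ B₁ B₂ : Finset α) : Prop where
  isPiece_left : IsPiece T B₁
  isPiece_right : IsPiece T B₂
  disjoint : Disjoint B₁ B₂
  union_eq : B₁ ∪ B₂ = τ
  exists_covBy : ∃ i ∈ B₁, ∃ j ∈ B₂, i ⋖ j
  not_covBy : ∀ i ∈ B₂, ∀ j ∈ B₁, ¬ i ⋖ j
  subset_or_subset : ∀ σ ∈ T, σ ⊂ τ → σ ⊆ B₁ ∨ σ ⊆ B₂

theorem IsMaximalTubing.exists_isSplit (hT : IsMaximalTubing T)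
    (hconn : IsConnectedIn (univ : Finset α)) (hn : 2 ≤ Fintype.card α) (hτ : IsNode T τ) :
    ∃ B₁ B₂, IsSplit T τ B₁ B₂ := by
  obtain ⟨B₁, B₂, h⟩ :=
    exists_blockCovBy hT.1 (hτ.isConnectedIn hT.1 hconn) (hτ.two_le_card hT.1 hn)
  have hblock := fun {D} (hD : IsBlock T τ D) => hT.eq_or_eq_of_isBlock hτ h hD
  have hcover : τ ⊆ B₁ ∪ B₂ := fun x hx => by
    obtain ⟨y, hy, hyx⟩ := exists_mem_ne (hτ.two_le_card hT.1 hn) x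
    obtain ⟨D, hD, hxD⟩ := exists_isBlock_mem (T := T) hx hy hyx
    rcases hblock hD with rfl | rfl
    exacts [mem_union_left _ hxD, mem_union_right _ hxD]
  refine ⟨B₁, B₂, h.1.1.isPiece, h.1.2.1.isPiece, h.1.2.2.2.2.1,
    subset_antisymm h.union_subset hcover,
    h.exists_covBy hT.1 hτ, fun i hi j hj hij => ?_, fun σ hσ hστ => ?_⟩
  · have hne : B₂ ≠ B₁ := fun e => hT.1.not_transGen_blockRel_self (.single (e ▸ h.1))
    exact hT.1.not_transGen_blockRel_self
      (.tail (.single h.1) (.of_lt hT.1 h.1.2.1 h.1.1 hne hi hj hij.lt))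
  · obtain ⟨D, hD, hσD⟩ := IsPiece.exists_isBlock (.inl hσ) hστ
    rcases hblock hD with rfl | rfl
    exacts [.inl hσD, .inr hσD]

end Tubing

section Alpha

variable {α : Type*} [PartialOrder α] {σ B C : Finset α} {p q : α → ℝ}

open Classical in
noncomputable def crossF (B C : Finset α) (p : α → ℝ) : ℝ :=
  ∑ i ∈ B, ∑ j ∈ C, if i ⋖ j then p j - p i else 0

open Classical in
noncomputable def coverCount (B C : Finset α) : ℝ :=
  ∑ i ∈ B, ∑ j ∈ C, if i ⋖ j then 1 else 0

theorem alphaF_eq_crossF (σ : Finset α) (p : α → ℝ) : alphaF σ p = crossF σ σ p := rfl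

theorem alphaF_sub (σ : Finset α) (p q : α → ℝ) : alphaF σ (p - q) = alphaF σ p - alphaF σ q := by
  simp only [alphaF, ← sum_sub_distrib]
  refine sum_congr rfl fun i _ => sum_congr rfl fun j _ => ?_
  split_ifs
  · simp only [Pi.sub_apply]; ring
  · ring

theorem crossF_of_eq_add {s t : ℝ} (hB : ∀ i ∈ B, p i = q i + s) (hC : ∀ j ∈ C, p j = q j + t) :
    crossF B C p = crossF B C q + (t - s) * coverCount B C := by
  simp only [crossF, coverCount, mul_sum, ← sum_add_distrib]
  refine sum_congr rfl fun i hi => sum_congr rfl fun j hj => ?_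
  split_ifs
  · rw [hB i hi, hC j hj]; ring
  · ring

theorem alphaF_of_eq_add {s : ℝ} (h : ∀ i ∈ σ, p i = q i + s) : alphaF σ p = alphaF σ q := by
  simp [alphaF_eq_crossF, crossF_of_eq_add h h]

theorem crossF_eq_zero (h : ∀ i ∈ B, ∀ j ∈ C, ¬ i ⋖ j) (p : α → ℝ) : crossF B C p = 0 :=
  sum_eq_zero fun i hi => sum_eq_zero fun j hj => if_neg (h i hi j hj)

theorem coverCount_pos (h : ∃ i ∈ B, ∃ j ∈ C, i ⋖ j) : 0 < coverCount B C := by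
  obtain ⟨i, hi, j, hj, hij⟩ := h
  refine sum_pos' (fun _ _ => sum_nonneg fun _ _ => ?_)
    ⟨i, hi, sum_pos' (fun _ _ => ?_) ⟨j, hj, ?_⟩⟩
  all_goals split_ifs <;> simp_all

variable [DecidableEq α]

theorem alphaF_union (h : Disjoint B C) (p : α → ℝ) :
    alphaF (B ∪ C) p = alphaF B p + alphaF C p + crossF B C p + crossF C B p := by
  simp only [alphaF_eq_crossF, crossF, sum_union h, sum_add_distrib]
  ring

theorem IsSplit.ssubset_left {T : Finset (Finset α)} {τ B₁ B₂ : Finset α}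
    (hs : IsSplit T τ B₁ B₂) : B₁ ⊂ τ := by
  obtain ⟨-, -, j, hj, -⟩ := hs.exists_covBy
  refine ssubset_of_subset_of_ne (hs.union_eq ▸ subset_union_left) ?_
  rintro rfl
  exact disjoint_right.mp hs.disjoint hj (hs.union_eq ▸ mem_union_right _ hj)

theorem IsSplit.ssubset_right {T : Finset (Finset α)} {τ B₁ B₂ : Finset α}
    (hs : IsSplit T τ B₁ B₂) : B₂ ⊂ τ := by
  obtain ⟨i, hi, -⟩ := hs.exists_covBy
  refine ssubset_of_subset_of_ne (hs.union_eq ▸ subset_union_right) ?_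
  rintro rfl
  exact disjoint_left.mp hs.disjoint hi (hs.union_eq ▸ mem_union_left _ hi)

theorem IsSplit.alphaF_eq {T : Finset (Finset α)} {τ B₁ B₂ : Finset α} (hs : IsSplit T τ B₁ B₂)
    {s t : ℝ} (h₁ : ∀ i ∈ B₁, p i = q i + s) (h₂ : ∀ i ∈ B₂, p i = q i + t) :
    alphaF τ p = alphaF τ q + (t - s) * coverCount B₁ B₂ := by
  rw [← hs.union_eq, alphaF_union hs.disjoint, alphaF_union hs.disjoint, alphaF_of_eq_add h₁,
    alphaF_of_eq_add h₂, crossF_of_eq_add h₁ h₂, crossF_eq_zero hs.not_covBy,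
    crossF_eq_zero hs.not_covBy]
  ring

end Alpha

section Solution

variable {α : Type*} [Fintype α] [PartialOrder α] [DecidableEq α] {T : Finset (Finset α)}
  {τ B₁ B₂ : Finset α}

theorem IsSplit.exists_alphaF_eq (hs : IsSplit T τ B₁ B₂) (c : Finset α → ℝ) {p₁ p₂ : α → ℝ}
    (hp₁ : ∀ σ ∈ insert univ T, σ ⊆ B₁ → alphaF σ p₁ = c σ)
    (hp₂ : ∀ σ ∈ insert univ T, σ ⊆ B₂ → alphaF σ p₂ = c σ) :
    ∃ p, ∀ σ ∈ insert univ T, σ ⊆ τ → alphaF σ p = c σ := by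
  let q : α → ℝ := fun i => if i ∈ B₁ then p₁ i else p₂ i
  have hM := coverCount_pos hs.exists_covBy
  -- shifting `p₂` by `t` changes `alphaF τ` by `t * coverCount B₁ B₂` and nothing else
  let t := (c τ - alphaF τ q) / coverCount B₁ B₂
  let p : α → ℝ := fun i => if i ∈ B₁ then p₁ i else p₂ i + t
  have hB₂ : ∀ {i}, i ∈ B₂ → i ∉ B₁ := fun hi => disjoint_right.mp hs.disjoint hi
  have h₁ : ∀ i ∈ B₁, p i = p₁ i + 0 := fun i hi => by simp [p, hi]
  have h₂ : ∀ i ∈ B₂, p i = p₂ i + t := fun i hi => by simp [p, hB₂ hi]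
  refine ⟨p, fun σ hσ hστ => ?_⟩
  by_cases hστ' : σ = τ
  · subst hστ'
    have ht : t * coverCount B₁ B₂ = c σ - alphaF σ q := div_mul_cancel₀ _ hM.ne'
    rw [hs.alphaF_eq (q := q) (s := 0) (t := t) (fun i hi => by simp [p, q, hi])
      (fun i hi => by simp [p, q, hB₂ hi]), sub_zero, ht]
    ring
  have hσT : σ ∈ T := (mem_insert.mp hσ).resolve_left (by
    rintro rfl
    exact hστ' (univ_subset_iff.mp hστ).symm)
  rcases hs.subset_or_subset σ hσT (ssubset_of_subset_of_ne hστ hστ') with h | h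
  · rw [alphaF_of_eq_add fun i hi => h₁ i (h hi)]
    exact hp₁ σ hσ h
  · rw [alphaF_of_eq_add fun i hi => h₂ i (h hi)]
    exact hp₂ σ hσ h

theorem exists_alphaF_eq (hcard : ∀ σ ∈ insert univ T, 2 ≤ σ.card)
    (hsplit : ∀ τ, IsNode T τ → ∃ B₁ B₂, IsSplit T τ B₁ B₂) (c : Finset α → ℝ)
    (hτ : IsNode T τ ∨ ∃ x, τ = {x}) : ∃ p, ∀ σ ∈ insert univ T, σ ⊆ τ → alphaF σ p = c σ := by
  induction τ using Finset.strongInduction with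
  | H τ ih =>
  rcases hτ with hτ | ⟨x, rfl⟩
  · obtain ⟨B₁, B₂, hs⟩ := hsplit τ hτ
    obtain ⟨p₁, hp₁⟩ := ih B₁ hs.ssubset_left (hs.isPiece_left.imp_left .inr)
    obtain ⟨p₂, hp₂⟩ := ih B₂ hs.ssubset_right (hs.isPiece_right.imp_left .inr)
    exact hs.exists_alphaF_eq c hp₁ hp₂
  · refine ⟨0, fun σ hσ hσx => absurd (card_le_card hσx) ?_⟩
    have := hcard σ hσ
    rw [card_singleton]
    omega

theorem exists_const_of_alphaF_eq_zero
    (hsplit : ∀ τ, IsNode T τ → ∃ B₁ B₂, IsSplit T τ B₁ B₂) (hτ : IsNode T τ ∨ ∃ x, τ = {x})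
    {d : α → ℝ} (hd : ∀ σ ∈ insert univ T, σ ⊆ τ → alphaF σ d = 0) : ∃ s, ∀ i ∈ τ, d i = s := by
  induction τ using Finset.strongInduction with
  | H τ ih =>
  rcases hτ with hτ | ⟨x, rfl⟩
  · obtain ⟨B₁, B₂, hs⟩ := hsplit τ hτ
    obtain ⟨s₁, hs₁⟩ := ih B₁ hs.ssubset_left (hs.isPiece_left.imp_left .inr)
      fun σ hσ h => hd σ hσ (h.trans hs.ssubset_left.subset)
    obtain ⟨s₂, hs₂⟩ := ih B₂ hs.ssubset_right (hs.isPiece_right.imp_left .inr)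
      fun σ hσ h => hd σ hσ (h.trans hs.ssubset_right.subset)
    have hτ' : τ ∈ insert univ T := by
      rcases hτ with rfl | hτ
      exacts [mem_insert_self _ _, mem_insert_of_mem hτ]
    have key := hs.alphaF_eq (p := d) (q := 0) (s := s₁) (t := s₂) (fun i hi => by simp [hs₁ i hi])
      (fun i hi => by simp [hs₂ i hi])
    rw [hd τ hτ' subset_rfl, show alphaF τ 0 = 0 by simp [alphaF], zero_add] at key
    have hs₁₂ : s₂ = s₁ := by
      have := (mul_eq_zero.mp key.symm).resolve_right (coverCount_pos hs.exists_covBy).ne'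
      linarith
    refine ⟨s₁, fun i hi => ?_⟩
    rcases mem_union.mp (hs.union_eq ▸ hi) with hi | hi
    exacts [hs₁ i hi, (hs₂ i hi).trans hs₁₂]
  · exact ⟨d x, fun i hi => by rw [mem_singleton.mp hi]⟩

end Solution

/-- for a maximal proper tubing `T`, the intersection of the
hyperplanes `H_τ`, `τ ∈ T ∪ {P}`, is a single point of `ℝ^P_{Σ=0}`. -/
theorem vertex_lemma {α : Type*} [Fintype α] [PartialOrder α] [DecidableEq α]
    (hconn : IsConnectedIn (Finset.univ : Finset α)) (hn : 2 ≤ Fintype.card α)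
    (T : Finset (Finset α)) (hT : IsMaximalTubing T) :
    ∃! p : α → ℝ, (∑ i, p i = 0) ∧
      ∀ τ ∈ insert Finset.univ T, alphaF τ p = (Fintype.card α : ℝ) ^ (2 * τ.card) := by
  have hsplit := fun τ (hτ : IsNode T τ) => hT.exists_isSplit hconn hn hτ
  have hcard : ∀ σ ∈ insert univ T, 2 ≤ σ.card := fun σ hσ => by
    rcases mem_insert.mp hσ with rfl | hσ
    exacts [card_univ (α := α) ▸ hn, (hT.1.1 σ hσ).1.2.2]
  obtain ⟨p₀, hp₀⟩ := exists_alphaF_eq hcard hsplit (fun σ => (Fintype.card α : ℝ) ^ (2 * σ.card))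
    (.inl (.inl rfl))
  have hn' : (Fintype.card α : ℝ) ≠ 0 := by positivity
  let p : α → ℝ := fun i => p₀ i - (∑ j, p₀ j) / Fintype.card α
  have hp : ∀ τ ∈ insert univ T, alphaF τ p = (Fintype.card α : ℝ) ^ (2 * τ.card) :=
    fun τ hτ => (alphaF_of_eq_add fun i _ => sub_eq_add_neg _ _).trans (hp₀ τ hτ (subset_univ τ))
  have hp_sum : ∑ i, p i = 0 := by
    simp only [p, sum_sub_distrib, sum_const, card_univ, nsmul_eq_mul]
    field_simp
    ring
  refine ⟨p, ⟨hp_sum, hp⟩, fun q ⟨hq_sum, hq⟩ => ?_⟩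
  obtain ⟨s, hs⟩ := exists_const_of_alphaF_eq_zero hsplit (.inl (.inl rfl)) (d := q - p)
    fun σ hσ _ => by rw [alphaF_sub, hq σ hσ, hp σ hσ, sub_self]
  have hs₀ : (Fintype.card α : ℝ) * s = 0 := by
    have := sum_congr rfl hs
    simpa [sum_sub_distrib, hq_sum, hp_sum] using this.symm
  funext i
  have := hs i (mem_univ i)
  simp only [Pi.sub_apply, (mul_eq_zero.mp hs₀).resolve_left hn'] at this
  linarith
end
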